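/- arXiv:1112.3450 — 2 statements merged into one kernel-verified Lean document; each statement's English description precedes it below -/
import Mathlib

section
/- For the Laplacian shrinkage estimator β̃ and any indices j, k ∈ {1,…,q}, one has λ₂·|(d_j β̃_j − a_j'β̃) − (d_k β̃_k − a_k'β̃)| ≤ n⁻¹‖x_j − x_k‖·‖y‖. -/
open Matrix Finset

/-! Perturbing the minimiser `β̃` along `e_j - e_k` changes `G` by a quadratic in the step size
that is minimal at `0`, so its linear coefficient vanishes:
`λ₂ ((Lβ̃)_j - (Lβ̃)_k) = n⁻¹ ⟪x_j - x_k, r̃⟫`. Cauchy–Schwarz bounds the right-hand side by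
`n⁻¹ ‖x_j - x_k‖ ‖r̃‖`, and `G β̃ ≤ G 0` gives `‖r̃‖ ≤ ‖y‖` because `L = D - A` is positive
semidefinite. -/

lemma eq_zero_of_forall_mul_add_mul_sq_nonneg {a b : ℝ} (h : ∀ t : ℝ, 0 ≤ a * t + b * t ^ 2) :
    a = 0 := by
  have hmin : IsLocalMin (fun t : ℝ => a * t + b * t ^ 2) 0 :=
    Filter.Eventually.of_forall fun t => by simpa using h t
  have hderiv : HasDerivAt (fun t : ℝ => a * t + b * t ^ 2) a 0 := by
    simpa using (hasDerivAt_const_mul a).fun_add ((hasDerivAt_pow 2 (0 : ℝ)).const_mul b)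
  exact hmin.hasDerivAt_eq_zero hderiv

section DotProduct

variable {ι : Type*} [Fintype ι]

lemma abs_dotProduct_le_sqrt_mul_sqrt (v w : ι → ℝ) :
    |v ⬝ᵥ w| ≤ √(v ⬝ᵥ v) * √(w ⬝ᵥ w) := by
  have hv : 0 ≤ v ⬝ᵥ v := sum_nonneg fun i _ => mul_self_nonneg (v i)
  rw [← Real.sqrt_mul hv]
  apply Real.abs_le_sqrt
  simpa only [dotProduct, sq] using sum_mul_sq_le_sq_mul_sq univ v w

lemma sub_smul_dotProduct_sub_smul (r w : ι → ℝ) (t : ℝ) :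
    (r - t • w) ⬝ᵥ (r - t • w) = r ⬝ᵥ r - 2 * t * (w ⬝ᵥ r) + t ^ 2 * (w ⬝ᵥ w) := by
  simp only [sub_dotProduct, dotProduct_sub, smul_dotProduct, dotProduct_smul, smul_eq_mul,
    dotProduct_comm r w]
  ring

lemma Matrix.IsSymm.dotProduct_mulVec_comm {M : Matrix ι ι ℝ} (hM : M.IsSymm) (u v : ι → ℝ) :
    u ⬝ᵥ M *ᵥ v = v ⬝ᵥ M *ᵥ u := by
  rw [dotProduct_mulVec, ← mulVec_transpose, hM.eq, dotProduct_comm]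

lemma Matrix.IsSymm.add_smul_dotProduct_mulVec_add_smul {M : Matrix ι ι ℝ} (hM : M.IsSymm)
    (u v : ι → ℝ) (t : ℝ) :
    (u + t • v) ⬝ᵥ M *ᵥ (u + t • v)
      = u ⬝ᵥ M *ᵥ u + 2 * t * (v ⬝ᵥ M *ᵥ u) + t ^ 2 * (v ⬝ᵥ M *ᵥ v) := by
  simp only [mulVec_add, mulVec_smul, add_dotProduct, dotProduct_add, smul_dotProduct,
    dotProduct_smul, smul_eq_mul, hM.dotProduct_mulVec_comm u v]
  ring

lemma dotProduct_diagonal_sub_mulVec_expand [DecidableEq ι] (A : Matrix ι ι ℝ) (d b : ι → ℝ) :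
    b ⬝ᵥ (diagonal d - A) *ᵥ b = ∑ j, d j * b j ^ 2 - ∑ j, ∑ k, A j k * (b j * b k) := by
  rw [sub_mulVec, dotProduct_sub]
  simp only [dotProduct, mulVec_diagonal]
  simp only [mulVec, dotProduct, mul_sum]
  congr 1
  · exact sum_congr rfl fun j _ => by ring
  · exact sum_congr rfl fun j _ => sum_congr rfl fun k _ => by ring

theorem dotProduct_diagonal_sub_mulVec_nonneg [DecidableEq ι] {A : Matrix ι ι ℝ}
    (hA : A.IsSymm) {d : ι → ℝ} (hd : ∀ j, ∑ k, |A j k| ≤ d j) (b : ι → ℝ) :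
    0 ≤ b ⬝ᵥ (diagonal d - A) *ᵥ b := by
  have hpair : ∀ j k, 2 * (A j k * (b j * b k)) ≤ |A j k| * b j ^ 2 + |A j k| * b k ^ 2 := by
    intro j k
    have h := le_abs_self (A j k * (b j * b k))
    rw [abs_mul, abs_mul] at h
    nlinarith [two_mul_le_add_sq |b j| |b k|, abs_nonneg (A j k), sq_abs (b j), sq_abs (b k)]
  have hsum := sum_le_sum fun j (_ : j ∈ univ) => sum_le_sum fun k (_ : k ∈ univ) => hpair j k
  have hswap : ∑ j, ∑ k, |A j k| * b k ^ 2 = ∑ j, ∑ k, |A j k| * b j ^ 2 := by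
    rw [sum_comm]
    simp only [hA.apply]
  simp only [sum_add_distrib, ← mul_sum, hswap] at hsum
  have hdiag : ∑ j, ∑ k, |A j k| * b j ^ 2 ≤ ∑ j, d j * b j ^ 2 :=
    sum_le_sum fun j _ => by
      rw [← sum_mul]
      exact mul_le_mul_of_nonneg_right (hd j) (sq_nonneg _)
  rw [dotProduct_diagonal_sub_mulVec_expand]
  linarith

end DotProduct

section PenalizedLeastSquares

variable {ι κ : Type*} [Fintype ι] [Fintype κ]

noncomputable def penalizedLeastSquares (X : Matrix ι κ ℝ) (y : ι → ℝ) (M : Matrix κ κ ℝ)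
    (c μ : ℝ) (b : κ → ℝ) : ℝ :=
  c * ((y - X *ᵥ b) ⬝ᵥ (y - X *ᵥ b)) + μ * (b ⬝ᵥ M *ᵥ b)

variable {X : Matrix ι κ ℝ} {y : ι → ℝ} {M : Matrix κ κ ℝ} {c μ : ℝ}

lemma penalizedLeastSquares_add_smul (hM : M.IsSymm) (β v : κ → ℝ) (t : ℝ) :
    penalizedLeastSquares X y M c μ (β + t • v)
      = penalizedLeastSquares X y M c μ β
        + 2 * (μ * (v ⬝ᵥ M *ᵥ β) - c * (X *ᵥ v ⬝ᵥ (y - X *ᵥ β))) * t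
        + (c * (X *ᵥ v ⬝ᵥ X *ᵥ v) + μ * (v ⬝ᵥ M *ᵥ v)) * t ^ 2 := by
  have hres : y - X *ᵥ (β + t • v) = (y - X *ᵥ β) - t • X *ᵥ v := by
    rw [mulVec_add, mulVec_smul]
    abel
  simp only [penalizedLeastSquares, hres, sub_smul_dotProduct_sub_smul,
    hM.add_smul_dotProduct_mulVec_add_smul]
  ring

theorem penalizedLeastSquares_stationary (hM : M.IsSymm) {β : κ → ℝ}
    (hmin : ∀ b, penalizedLeastSquares X y M c μ β ≤ penalizedLeastSquares X y M c μ b)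
    (v : κ → ℝ) :
    μ * (v ⬝ᵥ M *ᵥ β) = c * (X *ᵥ v ⬝ᵥ (y - X *ᵥ β)) := by
  have hlin : 2 * (μ * (v ⬝ᵥ M *ᵥ β) - c * (X *ᵥ v ⬝ᵥ (y - X *ᵥ β))) = 0 :=
    eq_zero_of_forall_mul_add_mul_sq_nonneg (b := c * (X *ᵥ v ⬝ᵥ X *ᵥ v) + μ * (v ⬝ᵥ M *ᵥ v))
      fun t => by
        have h := hmin (β + t • v)
        rw [penalizedLeastSquares_add_smul hM] at h
        linarith
  linarith

theorem penalizedLeastSquares_residual_le (hc : 0 < c) (hμ : 0 ≤ μ)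
    (hM : ∀ b, 0 ≤ b ⬝ᵥ M *ᵥ b) {β : κ → ℝ}
    (hmin : ∀ b, penalizedLeastSquares X y M c μ β ≤ penalizedLeastSquares X y M c μ b) :
    (y - X *ᵥ β) ⬝ᵥ (y - X *ᵥ β) ≤ y ⬝ᵥ y := by
  have h0 := hmin 0
  simp only [penalizedLeastSquares, mulVec_zero, sub_zero, zero_dotProduct, mul_zero,
    add_zero] at h0
  have hpen := mul_nonneg hμ (hM β)
  exact le_of_mul_le_mul_left (by linarith) hc

end PenalizedLeastSquares

theorem laplacian_shrinkage_pairwise_bound_general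
    (n q : ℕ) (hn : 0 < n)
    (y : Fin n → ℝ) (X : Matrix (Fin n) (Fin q) ℝ)
    (A : Matrix (Fin q) (Fin q) ℝ) (hAsymm : A.IsSymm)
    (d : Fin q → ℝ) (hd : ∀ j, d j = ∑ k, |A j k|)
    (L : Matrix (Fin q) (Fin q) ℝ) (hL : L = Matrix.diagonal d - A)
    (lam2 : ℝ) (hlam2 : 0 < lam2)
    (G : (Fin q → ℝ) → ℝ)
    (hG : ∀ b, G b = (2 * n : ℝ)⁻¹ * ∑ i, (y i - X.mulVec b i)^2
      + lam2 / 2 * (b ⬝ᵥ L.mulVec b))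
    (βt : Fin q → ℝ) (hmin : ∀ b, G βt ≤ G b) :
    ∀ j k : Fin q,
      lam2 * |(d j * βt j - ∑ l, A j l * βt l) - (d k * βt k - ∑ l, A k l * βt l)|
        ≤ Real.sqrt (∑ i, (X i j - X i k)^2) * Real.sqrt (∑ i, (y i)^2) / n := by
  intro j k
  have hG' : G = penalizedLeastSquares X y L (2 * n : ℝ)⁻¹ (lam2 / 2) :=
    funext fun b => by simp only [hG, penalizedLeastSquares, dotProduct, sq, Pi.sub_apply]
  rw [hG'] at hmin
  set v : Fin q → ℝ := Pi.single j 1 - Pi.single k 1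
  have hstat := penalizedLeastSquares_stationary (hL ▸ (isSymm_diagonal d).sub hAsymm) hmin v
  have hLv : v ⬝ᵥ L *ᵥ βt
      = (d j * βt j - ∑ l, A j l * βt l) - (d k * βt k - ∑ l, A k l * βt l) := by
    have hrow : ∀ m, (L *ᵥ βt) m = d m * βt m - ∑ l, A m l * βt l := fun m => by
      rw [hL, sub_mulVec, Pi.sub_apply, mulVec_diagonal]; rfl
    rw [sub_dotProduct, single_dotProduct, single_dotProduct, hrow, hrow, one_mul, one_mul]
  have hres := penalizedLeastSquares_residual_le (by positivity) (by positivity)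
    (hL ▸ dotProduct_diagonal_sub_mulVec_nonneg hAsymm fun j => (hd j).ge) hmin
  calc lam2 * |(d j * βt j - ∑ l, A j l * βt l) - (d k * βt k - ∑ l, A k l * βt l)|
      = |X *ᵥ v ⬝ᵥ (y - X *ᵥ βt)| / n := by
        have hscaled : lam2 * (v ⬝ᵥ L *ᵥ βt) = X *ᵥ v ⬝ᵥ (y - X *ᵥ βt) / n := by
          linear_combination 2 * hstat
        rw [← hLv, ← abs_of_pos hlam2, ← abs_mul, hscaled, abs_div, Nat.abs_cast]
    _ ≤ √(X *ᵥ v ⬝ᵥ X *ᵥ v) * √((y - X *ᵥ βt) ⬝ᵥ (y - X *ᵥ βt)) / n := by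
        gcongr
        exact abs_dotProduct_le_sqrt_mul_sqrt _ _
    _ ≤ √(X *ᵥ v ⬝ᵥ X *ᵥ v) * √(y ⬝ᵥ y) / n := by gcongr
    _ = _ := by simp [v, mulVec_sub, dotProduct, sq]

/-- **Proposition 1(ii) of Huang, Ma, Li, Zhang (2011).**
For the Laplacian shrinkage estimator `β̃` and any indices `j, k`,
`λ₂·|(d_j β̃_j − a_j'β̃) − (d_k β̃_k − a_k'β̃)| ≤ n⁻¹‖x_j − x_k‖·‖y‖`. -/
theorem laplacian_shrinkage_pairwise_bound
    (n q : ℕ) (hn : 0 < n) (hq : 0 < q)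
    (y : Fin n → ℝ) (X : Matrix (Fin n) (Fin q) ℝ)
    (hstd : ∀ j, ∑ i, (X i j)^2 = (n : ℝ))
    (A : Matrix (Fin q) (Fin q) ℝ) (hAsymm : A.IsSymm) (hAdiag : ∀ j, 0 ≤ A j j)
    (d : Fin q → ℝ) (hd : ∀ j, d j = ∑ k, |A j k|)
    (L : Matrix (Fin q) (Fin q) ℝ) (hL : L = Matrix.diagonal d - A)
    (lam2 : ℝ) (hlam2 : 0 < lam2)
    (G : (Fin q → ℝ) → ℝ)
    (hG : ∀ b, G b = (2 * n : ℝ)⁻¹ * ∑ i, (y i - X.mulVec b i)^2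
      + lam2 / 2 * (b ⬝ᵥ L.mulVec b))
    (βt : Fin q → ℝ) (hmin : ∀ b, G βt ≤ G b) :
    ∀ j k : Fin q,
      lam2 * |(d j * βt j - ∑ l, A j l * βt l) - (d k * βt k - ∑ l, A k l * βt l)|
        ≤ Real.sqrt (∑ i, (X i j - X i k)^2) * Real.sqrt (∑ i, (y i)^2) / n :=
  laplacian_shrinkage_pairwise_bound_general n q hn y X A hAsymm d hd L hL lam2 hlam2 G hG βt hmin
end

section
/- For the group-normalized Laplacian shrinkage estimator β̃ and any two indices j, k belonging to the same group V_g, one has λ₂·|β̃_j − β̃_k| ≤ n⁻¹‖x_j − x_k‖·‖y‖. -/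
/-!
Perturbing `β̃` along `e_j − e_k` leaves every group sum unchanged, so the objective restricted to
that line is an exact quadratic in the step `t`, and minimality forces its linear coefficient to
vanish: `λ₂ (β̃_j − β̃_k) = n⁻¹ ⟨y − Xβ̃, x_j − x_k⟩`. Cauchy–Schwarz together with
`‖y − Xβ̃‖ ≤ ‖y‖` (compare with `b = 0`; the penalty is nonnegative) gives the bound.
-/

open Matrix Finset

noncomputable section

section Penalty

variable {ι κ : Type*}

def centeredSumSq (s : Finset ι) (b : ι → ℝ) : ℝ :=
  ∑ j ∈ s, b j ^ 2 - (#s : ℝ)⁻¹ * (∑ j ∈ s, b j) ^ 2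

lemma centeredSumSq_nonneg (s : Finset ι) (b : ι → ℝ) : 0 ≤ centeredSumSq s b := by
  rw [centeredSumSq, sub_nonneg]
  rcases (#s).eq_zero_or_pos with hs | hs
  · simp [hs, sum_nonneg fun j _ => sq_nonneg (b j)]
  · rw [inv_mul_le_iff₀ (by exact_mod_cast hs)]
    exact sq_sum_le_card_mul_sum_sq

lemma centeredSumSq_add_smul (s : Finset ι) (b d : ι → ℝ) (hd : ∑ j ∈ s, d j = 0) (t : ℝ) :
    centeredSumSq s (b + t • d) =
      centeredSumSq s b + 2 * t * ∑ j ∈ s, b j * d j + t ^ 2 * ∑ j ∈ s, d j ^ 2 := by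
  have hsum : ∑ j ∈ s, (b + t • d) j = ∑ j ∈ s, b j := by
    simp only [Pi.add_apply, Pi.smul_apply, smul_eq_mul, sum_add_distrib, ← mul_sum, hd,
      mul_zero, add_zero]
  have hsq : ∑ j ∈ s, (b + t • d) j ^ 2 =
      ∑ j ∈ s, b j ^ 2 + 2 * t * ∑ j ∈ s, b j * d j + t ^ 2 * ∑ j ∈ s, d j ^ 2 := by
    simp only [mul_sum, ← sum_add_distrib]
    exact sum_congr rfl fun j _ => by simp only [Pi.add_apply, Pi.smul_apply, smul_eq_mul]; ring
  rw [centeredSumSq, centeredSumSq, hsum, hsq]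
  ring

variable [Fintype ι] [Fintype κ] [DecidableEq κ]

/-- The group-normalized Laplacian penalty `∑_g b_g'(I - v_g⁻¹ 1_g 1_g')b_g`. -/
def groupPenalty (grp : ι → κ) (b : ι → ℝ) : ℝ :=
  ∑ g, centeredSumSq (univ.filter fun j => grp j = g) b

lemma groupPenalty_nonneg (grp : ι → κ) (b : ι → ℝ) : 0 ≤ groupPenalty grp b :=
  sum_nonneg fun _ _ => centeredSumSq_nonneg _ b

lemma groupPenalty_add_smul (grp : ι → κ) (b d : ι → ℝ)
    (hd : ∀ g, ∑ j ∈ univ.filter (fun j => grp j = g), d j = 0) (t : ℝ) :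
    groupPenalty grp (b + t • d) = groupPenalty grp b + 2 * t * (b ⬝ᵥ d) + t ^ 2 * (d ⬝ᵥ d) := by
  simp only [groupPenalty, centeredSumSq_add_smul _ b d (hd _), sum_add_distrib, ← mul_sum,
    sum_fiberwise, dotProduct, sq]

end Penalty

lemma sum_sq_sub_mulVec_add_smul {m ι : Type*} [Fintype m] [Fintype ι] (y : m → ℝ)
    (X : Matrix m ι ℝ) (b d : ι → ℝ) (t : ℝ) :
    ∑ i, (y i - (X *ᵥ (b + t • d)) i) ^ 2 = ∑ i, (y i - (X *ᵥ b) i) ^ 2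
      - 2 * t * ((y - X *ᵥ b) ⬝ᵥ (X *ᵥ d)) + t ^ 2 * ((X *ᵥ d) ⬝ᵥ (X *ᵥ d)) := by
  simp only [Matrix.mulVec_add, Matrix.mulVec_smul, dotProduct, mul_sum, ← sum_sub_distrib,
    ← sum_add_distrib]
  refine sum_congr rfl fun i _ => ?_
  simp only [Pi.add_apply, Pi.sub_apply, Pi.smul_apply, smul_eq_mul]
  ring

lemma eq_zero_of_forall_mul_add_sq_mul_nonneg {B A : ℝ} (h : ∀ t : ℝ, 0 ≤ t * B + t ^ 2 * A) :
    B = 0 := by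
  -- at `t = -B/c` with `c = |A| + 1 > A` the value is `B²(A - c)/c² ≤ -B²/c²`
  set c := |A| + 1
  have hc : 0 < c := by positivity
  have hAc : A - c ≤ -1 := by linarith [le_abs_self A]
  have key := h (-B / c)
  rw [show -B / c * B + (-B / c) ^ 2 * A = B ^ 2 * (A - c) / c ^ 2 by field_simp; ring,
    le_div_iff₀ (by positivity), zero_mul] at key
  nlinarith [sq_nonneg B]

section Objective

variable {m ι κ : Type*} [Fintype m] [Fintype ι] [Fintype κ] [DecidableEq κ]

def groupLaplacianObjective (a μ : ℝ) (y : m → ℝ) (X : Matrix m ι ℝ) (grp : ι → κ)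
    (b : ι → ℝ) : ℝ :=
  a * ∑ i, (y i - (X *ᵥ b) i) ^ 2 + μ * groupPenalty grp b

variable {a μ : ℝ} {y : m → ℝ} {X : Matrix m ι ℝ} {grp : ι → κ} {β : ι → ℝ}

lemma groupLaplacianObjective_stationary
    (hmin : ∀ b, groupLaplacianObjective a μ y X grp β ≤ groupLaplacianObjective a μ y X grp b)
    (d : ι → ℝ) (hd : ∀ g, ∑ j ∈ univ.filter (fun j => grp j = g), d j = 0) :
    μ * (β ⬝ᵥ d) = a * ((y - X *ᵥ β) ⬝ᵥ (X *ᵥ d)) := by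
  have hquad : ∀ t : ℝ, 0 ≤ t * (2 * (μ * (β ⬝ᵥ d) - a * ((y - X *ᵥ β) ⬝ᵥ (X *ᵥ d))))
      + t ^ 2 * (a * ((X *ᵥ d) ⬝ᵥ (X *ᵥ d)) + μ * (d ⬝ᵥ d)) := by
    intro t
    have := hmin (β + t • d)
    rw [groupLaplacianObjective, groupLaplacianObjective, sum_sq_sub_mulVec_add_smul,
      groupPenalty_add_smul grp β d hd] at this
    linarith
  linarith [eq_zero_of_forall_mul_add_sq_mul_nonneg hquad]

lemma sum_sq_residual_le_of_minimizer (ha : 0 < a) (hμ : 0 ≤ μ)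
    (hmin : ∀ b, groupLaplacianObjective a μ y X grp β ≤ groupLaplacianObjective a μ y X grp b) :
    ∑ i, (y i - (X *ᵥ β) i) ^ 2 ≤ ∑ i, y i ^ 2 := by
  have h0 := hmin 0
  have hpen0 : groupPenalty grp (0 : ι → ℝ) = 0 := by simp [groupPenalty, centeredSumSq]
  simp only [groupLaplacianObjective, Matrix.mulVec_zero, Pi.zero_apply, sub_zero, hpen0,
    mul_zero, add_zero] at h0
  have := mul_nonneg hμ (groupPenalty_nonneg grp β)
  exact le_of_mul_le_mul_left (by linarith) ha

end Objective

lemma abs_sum_mul_le_sqrt_mul_sqrt {ι : Type*} (s : Finset ι) (f g : ι → ℝ) :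
    |∑ i ∈ s, f i * g i| ≤ √(∑ i ∈ s, f i ^ 2) * √(∑ i ∈ s, g i ^ 2) := by
  refine abs_le.2 ⟨neg_le.1 ?_, Real.sum_mul_le_sqrt_mul_sqrt s f g⟩
  simpa [neg_sq] using Real.sum_mul_le_sqrt_mul_sqrt s (-f) g

end

theorem grouped_laplacian_within_group_bound_general
    (n q J : ℕ) (hn : 0 < n)
    (y : Fin n → ℝ) (X : Matrix (Fin n) (Fin q) ℝ)
    -- partition of {1,…,q} into groups: `grp j` is the group of index j
    (grp : Fin q → Fin J)
    (lam2 : ℝ) (hlam2 : 0 < lam2)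
    (G : (Fin q → ℝ) → ℝ)
    (hG : ∀ b, G b = (2 * n : ℝ)⁻¹ * ∑ i, (y i - X.mulVec b i)^2
      + lam2 / 2 * ∑ g : Fin J,
          ((∑ j ∈ Finset.univ.filter (fun j => grp j = g), (b j)^2)
            - ((Finset.univ.filter (fun j => grp j = g)).card : ℝ)⁻¹
              * (∑ j ∈ Finset.univ.filter (fun j => grp j = g), b j)^2))
    (βt : Fin q → ℝ) (hmin : ∀ b, G βt ≤ G b) :
    ∀ j k : Fin q, grp j = grp k →
      lam2 * |βt j - βt k|
        ≤ Real.sqrt (∑ i, (X i j - X i k)^2) * Real.sqrt (∑ i, (y i)^2) / n := by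
  intro j k hjk
  have hGeq : G = groupLaplacianObjective (2 * n : ℝ)⁻¹ (lam2 / 2) y X grp := funext hG
  rw [hGeq] at hmin
  set d : Fin q → ℝ := Pi.single j 1 - Pi.single k 1
  have hd : ∀ g, ∑ l ∈ univ.filter (fun l => grp l = g), d l = 0 := by
    intro g
    by_cases hg : grp k = g <;> simp [d, sum_sub_distrib, sum_pi_single', hg, hjk]
  have hstat := groupLaplacianObjective_stationary hmin d hd
  have hβd : βt ⬝ᵥ d = βt j - βt k := by simp [d, dotProduct_sub]
  have hXd : X *ᵥ d = fun i => X i j - X i k := by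
    ext i; simp [d, Matrix.mulVec_sub]
  rw [hβd, hXd] at hstat
  have hres := sum_sq_residual_le_of_minimizer (by positivity) (by positivity) hmin
  calc lam2 * |βt j - βt k| = 2 * |lam2 / 2 * (βt j - βt k)| := by
        rw [abs_mul, abs_of_pos (half_pos hlam2)]; ring
    _ = |∑ i, (X i j - X i k) * (y - X *ᵥ βt) i| / n := by
        rw [hstat, dotProduct, abs_mul, abs_of_pos (by positivity)]
        simp only [mul_comm ((y - X *ᵥ βt) _)]
        field_simp
    _ ≤ √(∑ i, (X i j - X i k) ^ 2) * √(∑ i, (y - X *ᵥ βt) i ^ 2) / n := by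
        gcongr; exact abs_sum_mul_le_sqrt_mul_sqrt _ _ _
    _ ≤ √(∑ i, (X i j - X i k) ^ 2) * √(∑ i, y i ^ 2) / n := by
        gcongr _ * ?_ / _
        exact Real.sqrt_le_sqrt hres

/-- **Proposition 2(i) of Huang, Ma, Li, Zhang (2011).**
For the group-normalized Laplacian shrinkage estimator `β̃` and any two indices
`j, k` in the same group, `λ₂·|β̃_j − β̃_k| ≤ n⁻¹‖x_j − x_k‖·‖y‖`. -/
theorem grouped_laplacian_within_group_bound
    (n q J : ℕ) (hn : 0 < n)
    (y : Fin n → ℝ) (X : Matrix (Fin n) (Fin q) ℝ)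
    (hstd : ∀ j, ∑ i, (X i j)^2 = (n : ℝ))
    -- partition of {1,…,q} into groups: `grp j` is the group of index j
    (grp : Fin q → Fin J) (hsurj : Function.Surjective grp)
    (lam2 : ℝ) (hlam2 : 0 < lam2)
    (G : (Fin q → ℝ) → ℝ)
    (hG : ∀ b, G b = (2 * n : ℝ)⁻¹ * ∑ i, (y i - X.mulVec b i)^2
      + lam2 / 2 * ∑ g : Fin J,
          ((∑ j ∈ Finset.univ.filter (fun j => grp j = g), (b j)^2)
            - ((Finset.univ.filter (fun j => grp j = g)).card : ℝ)⁻¹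
              * (∑ j ∈ Finset.univ.filter (fun j => grp j = g), b j)^2))
    (βt : Fin q → ℝ) (hmin : ∀ b, G βt ≤ G b) :
    ∀ j k : Fin q, grp j = grp k →
      lam2 * |βt j - βt k|
        ≤ Real.sqrt (∑ i, (X i j - X i k)^2) * Real.sqrt (∑ i, (y i)^2) / n :=
  grouped_laplacian_within_group_bound_general n q J hn y X grp lam2 hlam2 G hG βt hmin
end
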